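/- On a compact convex polytope P ⊂ ℝⁿ, every continuous convex function is the uniform limit of a sequence of convex rational piecewise-linear functions (finite maxima of affine functions with rational coefficients); i.e. the convex rational piecewise-linear functions are dense in the continuous convex functions with respect to the sup norm. -/

import Mathlib

/-!
A continuous convex function on a compact set `P` is the supremum of its continuous affine
minorants, by Hahn–Banach separation from its closed epigraph. By compactness finitely many of
these minorants already come within `ε` of `f` at every point of `P`, and since `P` is bounded,
replacing their coefficients by nearby rationals moves them by less than `ε` on `P`.
-/

open Filter

/-- An affine-linear function with rational coefficients on `ℝⁿ`. -/
def IsRatAffine (n : ℕ) (g : EuclideanSpace ℝ (Fin n) → ℝ) : Prop :=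
  ∃ (c₀ : ℚ) (c : Fin n → ℚ), ∀ x, g x = (c₀ : ℝ) + ∑ i, (c i : ℝ) * x i

/-- A convex rational piecewise-linear function: a finite maximum of affine-linear
functions with rational coefficients. -/
def IsQPL (n : ℕ) (f : EuclideanSpace ℝ (Fin n) → ℝ) : Prop :=
  ∃ (k : ℕ) (g : Fin (k + 1) → EuclideanSpace ℝ (Fin n) → ℝ),
    (∀ r, IsRatAffine n (g r)) ∧ ∀ x, f x = ⨆ r, g r x

theorem exists_seq_tendstoUniformlyOn_of_forall_dist_le {α β : Type*} [PseudoMetricSpace β]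
    {p : (α → β) → Prop} {f : α → β} {s : Set α}
    (h : ∀ ε > 0, ∃ g, p g ∧ ∀ x ∈ s, dist (f x) (g x) ≤ ε) :
    ∃ g : ℕ → α → β, (∀ k, p (g k)) ∧ TendstoUniformlyOn g f atTop s := by
  choose g hgp hg using fun k : ℕ => h (1 / (k + 1)) Nat.one_div_pos_of_nat
  refine ⟨g, hgp, Metric.tendstoUniformlyOn_iff.2 fun ε hε => ?_⟩
  filter_upwards [tendsto_one_div_add_atTop_nhds_zero_nat.eventually_lt_const hε] with k hk x hx
  exact (hg k x hx).trans_lt hk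

theorem IsCompact.exists_finset_subset_forall_exists_lt {X : Type*} [TopologicalSpace X]
    {K : Set X} (hK : IsCompact K) {f : X → ℝ} (hf : ContinuousOn f K) {S : Set (X → ℝ)}
    (hS : ∀ x ∈ K, ∃ g ∈ S, ContinuousOn g K ∧ f x < g x) :
    ∃ t : Finset (X → ℝ), ↑t ⊆ S ∧ ∀ x ∈ K, ∃ g ∈ t, f x < g x := by
  classical
  choose! g hgS hgc hlt using hS
  obtain ⟨t, htK, hcover⟩ := hK.elim_nhdsWithin_subcover (fun x => {y | f y < g x y})
    fun x hx => (hf x hx).eventually_lt (hgc x hx x hx) (hlt x hx)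
  refine ⟨t.image g, by simpa [Set.subset_def] using fun x hx => hgS x (htK x hx), fun y hy => ?_⟩
  obtain ⟨x, hxt, hxy⟩ := Set.mem_iUnion₂.1 (hcover hy)
  exact ⟨g x, Finset.mem_image_of_mem g hxt, hxy⟩

theorem IsRatAffine.continuous {n : ℕ} {g : EuclideanSpace ℝ (Fin n) → ℝ}
    (hg : IsRatAffine n g) : Continuous g := by
  obtain ⟨c₀, c, hc⟩ := hg
  rw [funext hc]
  fun_prop

theorem IsQPL.iSup {n : ℕ} {ι : Type*} [Fintype ι] [Nonempty ι]
    {g : ι → EuclideanSpace ℝ (Fin n) → ℝ} (hg : ∀ i, IsRatAffine n (g i)) :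
    IsQPL n fun x => ⨆ i, g i x := by
  obtain ⟨k, hk⟩ := Nat.exists_eq_add_one_of_ne_zero (Fintype.card_ne_zero (α := ι))
  let e := Fintype.equivFinOfCardEq hk
  exact ⟨k, fun r => g (e.symm r), fun r => hg _,
    fun x => (e.symm.iSup_comp (g := fun i => g i x)).symm⟩

theorem ContinuousLinearMap.apply_eq_sum_single {n : ℕ} (l : EuclideanSpace ℝ (Fin n) →L[ℝ] ℝ)
    (x : EuclideanSpace ℝ (Fin n)) : l x = ∑ i, l (EuclideanSpace.single i 1) * x i := by
  conv_lhs => rw [← (EuclideanSpace.basisFun (Fin n) ℝ).sum_repr x]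
  simp [mul_comm]

theorem exists_isRatAffine_near {n : ℕ} (l : EuclideanSpace ℝ (Fin n) →L[ℝ] ℝ) (b : ℝ)
    {s : Set (EuclideanSpace ℝ (Fin n))} (hs : Bornology.IsBounded s) {δ : ℝ} (hδ : 0 < δ) :
    ∃ g, IsRatAffine n g ∧ ∀ x ∈ s, |g x - (l x + b)| < δ := by
  obtain ⟨R, hR, hsR⟩ := hs.exists_pos_norm_le
  set η := δ / (1 + n * R)
  have hη : 0 < η := by positivity
  obtain ⟨q₀, hq₀⟩ := exists_rat_near b hη
  choose q hq using fun i => exists_rat_near (l (EuclideanSpace.single i 1)) hη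
  refine ⟨_, ⟨q₀, q, fun x => rfl⟩, fun x hx => ?_⟩
  have hterm (i : Fin n) : |((q i : ℝ) - l (EuclideanSpace.single i 1)) * x i| ≤ η * R := by
    rw [abs_mul, abs_sub_comm]
    exact mul_le_mul (hq i).le ((PiLp.norm_apply_le x i).trans (hsR x hx)) (abs_nonneg _) hη.le
  calc |(q₀ + ∑ i, q i * x i) - (l x + b)|
      = |((q₀ : ℝ) - b) + ∑ i, ((q i : ℝ) - l (EuclideanSpace.single i 1)) * x i| := by
        rw [l.apply_eq_sum_single x]
        simp only [sub_mul, Finset.sum_sub_distrib]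
        congr 1
        ring
    _ ≤ |(q₀ : ℝ) - b| + ∑ i, |((q i : ℝ) - l (EuclideanSpace.single i 1)) * x i| :=
        (abs_add_le _ _).trans (by gcongr; exact Finset.abs_sum_le_sum_abs _ _)
    _ < η + ∑ _i : Fin n, η * R := by
        rw [abs_sub_comm]
        exact add_lt_add_of_lt_of_le hq₀ (Finset.sum_le_sum fun i _ => hterm i)
    _ = δ := by
        simp only [Finset.sum_const, Finset.card_univ, Fintype.card_fin, nsmul_eq_mul]
        rw [show η + n * (η * R) = η * (1 + n * R) by ring]
        exact div_mul_cancel₀ _ (by positivity)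

theorem ConvexOn.exists_isQPL_near {n : ℕ} {P : Set (EuclideanSpace ℝ (Fin n))}
    {f : EuclideanSpace ℝ (Fin n) → ℝ} (hP : IsCompact P) (hfc : ContinuousOn f P)
    (hf : ConvexOn ℝ P f) {ε : ℝ} (hε : 0 < ε) :
    ∃ G, IsQPL n G ∧ ∀ x ∈ P, dist (f x) (G x) ≤ ε := by
  rcases P.eq_empty_or_nonempty with rfl | ⟨x₀, hx₀⟩
  · exact ⟨0, ⟨0, fun _ _ => 0, fun _ => ⟨0, 0, by simp⟩, by simp⟩, by simp⟩
  set S := {g | IsRatAffine n g ∧ ∀ x ∈ P, g x ≤ f x + ε}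
  have hS : ∀ x ∈ P, ∃ g ∈ S, ContinuousOn g P ∧ f x - ε < g x := by
    intro x hx
    obtain ⟨l, b, hle, hlx⟩ := hf.exists_affine_le_of_lt (𝕜 := ℝ) hx
      (sub_lt_self (f x) (half_pos hε)) hP.isClosed hfc.lowerSemicontinuousOn
    rw [RCLike.re_to_real] at hlx
    obtain ⟨g, hg, hgl⟩ := exists_isRatAffine_near l b hP.isBounded (half_pos hε)
    refine ⟨g, ⟨hg, fun y hy => ?_⟩, hg.continuous.continuousOn, ?_⟩
    · have hly : l y + b ≤ f y := by simpa using hle ⟨y, hy⟩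
      linarith [(abs_lt.1 (hgl y hy)).2]
    · linarith [(abs_lt.1 (hgl x hx)).1]
  obtain ⟨t, htS, hcover⟩ := hP.exists_finset_subset_forall_exists_lt
    (f := fun x => f x - ε) (hfc.sub continuousOn_const) hS
  obtain ⟨g₀, hg₀t, -⟩ := hcover x₀ hx₀
  have : Nonempty t := ⟨⟨g₀, hg₀t⟩⟩
  refine ⟨fun x => ⨆ g : t, (g : _ → ℝ) x, IsQPL.iSup fun g => (htS g.2).1, fun x hx => ?_⟩
  obtain ⟨g, hgt, hg⟩ := hcover x hx
  have hlower :=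
    hg.trans_le (le_ciSup (Finite.bddAbove_range fun g : t => (g : _ → ℝ) x) ⟨g, hgt⟩)
  have hupper := ciSup_le fun g : t => (htS g.2).2 x hx
  exact abs_sub_le_iff.2 ⟨by linarith, by linarith⟩

theorem qpl_dense_in_continuous_convex_general
    (n : ℕ) (P : Set (EuclideanSpace ℝ (Fin n)))
    (hcomp : IsCompact P)
    (f : EuclideanSpace ℝ (Fin n) → ℝ)
    (hfc : ContinuousOn f P) (hfconv : ConvexOn ℝ P f) :
    ∃ g : ℕ → EuclideanSpace ℝ (Fin n) → ℝ,
      (∀ k, IsQPL n (g k)) ∧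
      TendstoUniformlyOn (fun k x => g k x) f atTop P :=
  exists_seq_tendstoUniformlyOn_of_forall_dist_le fun _ hε =>
    hfconv.exists_isQPL_near hcomp hfc hε

/-- On a compact convex polytope `P ⊂ ℝⁿ` with nonempty interior, every continuous convex
function is the uniform limit of a sequence of convex rational piecewise-linear functions:
the convex rational piecewise-linear functions are dense in the continuous convex
functions for the sup norm on `P`. -/
theorem qpl_dense_in_continuous_convex
    (n : ℕ) (P : Set (EuclideanSpace ℝ (Fin n)))
    (hconv : Convex ℝ P) (hcomp : IsCompact P) (hint : (interior P).Nonempty)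
    (f : EuclideanSpace ℝ (Fin n) → ℝ)
    (hfc : ContinuousOn f P) (hfconv : ConvexOn ℝ P f) :
    ∃ g : ℕ → EuclideanSpace ℝ (Fin n) → ℝ,
      (∀ k, IsQPL n (g k)) ∧
      TendstoUniformlyOn (fun k x => g k x) f atTop P :=
  qpl_dense_in_continuous_convex_general n P hcomp f hfc hfconv
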